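/- Let m be odd, and suppose A ⊆ Q_{d-1} is (d-1, (m-1)/2)-edge equitable, B ⊆ Q_{d-1} is (d-1, (m+1)/2)-edge equitable, and the number of pairs (a,b) ∈ A × B with b = a ⊕ e_1 equals m (i.e., ⟨P_A, X_1 P_B⟩ = m). Then, embedding Q_{d-1} in Q_d with last coordinate 0, the set A ∪ {b ⊕ e_1 ⊕ e_d : b ∈ B} is (d, m)-edge equitable. -/

import Mathlib

/-- Vertices of the hypercube `Q_d`. -/
abbrev Vtx (d : ℕ) := Fin d → ZMod 2

/-- The `i`-th standard basis vector of `(ZMod 2)^d`. -/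
def eV {d : ℕ} (i : Fin d) : Vtx d := Pi.single i 1

/-- The number of edges of `Q_d` in direction `i` whose two endpoints both lie
in `S`, i.e. the number of pairs `{t, t ⊕ e_i} ⊆ S`. -/
def edgeCount {d : ℕ} (S : Finset (Vtx d)) (i : Fin d) : ℕ :=
  (S.filter fun t => t i = 0 ∧ t + eV i ∈ S).card

/-- `S ⊆ Q_d` is a `(d,m)`-edge equitable design: exactly `m` edges of the
induced subgraph in each direction. -/
def Equitable {d : ℕ} (S : Finset (Vtx d)) (m : ℕ) : Prop :=
  ∀ i : Fin d, edgeCount S i = m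

/-- Embedding of `Q_d` into `Q_{d+1}` fixing the last coordinate to `0`. -/
def emb {d : ℕ} (t : Vtx d) : Vtx (d + 1) := Fin.snoc t 0

open Finset

lemma zmod2_cases (x : ZMod 2) : x = 0 ∨ x = 1 := by revert x; decide

lemma eV_self {d : ℕ} (i : Fin d) : eV i i = 1 := Pi.single_eq_same i 1

lemma eV_ne {d : ℕ} {i j : Fin d} (h : j ≠ i) : eV i j = 0 := Pi.single_eq_of_ne h 1

lemma one_one : (1 : ZMod 2) + 1 = 0 := by decide

lemma add_eV_add_eV {d : ℕ} (t : Vtx d) (i : Fin d) : t + eV i + eV i = t := by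
  have h : eV i + eV i = (0 : Vtx d) := by
    funext x
    rcases zmod2_cases (eV i x) with h | h <;> simp [h, one_one]
  rw [add_assoc, h, add_zero]

lemma edgeCount_flip {d : ℕ} (S : Finset (Vtx d)) (i : Fin d) :
    (S.filter fun t => t i = 1 ∧ t + eV i ∈ S).card = edgeCount S i := by
  unfold edgeCount
  apply Finset.card_bij' (fun t _ => t + eV i) (fun t _ => t + eV i)
  · intro a ha
    simp only [mem_filter] at ha ⊢
    refine ⟨ha.2.2, ?_, ?_⟩
    · simp [Pi.add_apply, eV_self, ha.2.1, one_one]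
    · rw [add_eV_add_eV]; exact ha.1
  · intro a ha
    simp only [mem_filter] at ha ⊢
    refine ⟨ha.2.2, ?_, ?_⟩
    · simp [Pi.add_apply, eV_self, ha.2.1]
    · rw [add_eV_add_eV]; exact ha.1
  · intro a _; exact add_eV_add_eV a i
  · intro a _; exact add_eV_add_eV a i

lemma mem_image_add {d : ℕ} (S : Finset (Vtx d)) (v x : Vtx d) :
    x + v ∈ S.image (· + v) ↔ x ∈ S := by
  simp only [Finset.mem_image]
  constructor
  · rintro ⟨s, hs, he⟩
    rwa [add_left_injective v he] at hs
  · exact fun h => ⟨x, h, rfl⟩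

lemma edgeCount_image_add {d : ℕ} (S : Finset (Vtx d)) (v : Vtx d) (i : Fin d) :
    edgeCount (S.image (· + v)) i = edgeCount S i := by
  unfold edgeCount
  rw [Finset.filter_image, Finset.card_image_of_injective _ (add_left_injective v)]
  have hcond : ∀ t : Vtx d,
      ((t + v) i = 0 ∧ t + v + eV i ∈ S.image (· + v)) ↔ (t i + v i = 0 ∧ t + eV i ∈ S) := by
    intro t
    have h1 : t + v + eV i = (t + eV i) + v := by ring
    rw [h1, mem_image_add]
    simp [Pi.add_apply]
  rw [Finset.filter_congr (fun t _ => hcond t)]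
  rcases zmod2_cases (v i) with hv | hv
  · rw [Finset.filter_congr (fun t _ => by rw [hv, add_zero])]
  · rw [Finset.filter_congr (s := S)
      (q := fun t => t i = 1 ∧ t + eV i ∈ S) (fun t _ => by
        rcases zmod2_cases (t i) with h | h <;> simp [h, hv, one_one])]
    exact edgeCount_flip S i

lemma emb_castSucc {d : ℕ} (t : Vtx d) (j : Fin d) :
    emb t (Fin.castSucc j) = t j := Fin.snoc_castSucc _ _ _

lemma emb_last {d : ℕ} (t : Vtx d) : emb t (Fin.last d) = 0 := Fin.snoc_last _ _

lemma emb_injective {d : ℕ} : Function.Injective (emb (d := d)) := by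
  intro a b h
  funext j
  have := congrFun h (Fin.castSucc j)
  rwa [emb_castSucc, emb_castSucc] at this

lemma emb_add_eV {d : ℕ} (t : Vtx d) (j : Fin d) :
    emb t + eV (Fin.castSucc j) = emb (t + eV j) := by
  funext i
  refine Fin.lastCases ?_ ?_ i
  · rw [Pi.add_apply, emb_last, emb_last, eV_ne (Fin.castSucc_lt_last j).ne', add_zero]
  · intro j'
    rw [Pi.add_apply, emb_castSucc, emb_castSucc, Pi.add_apply]
    congr 1
    simp [eV, Pi.single_apply, Fin.castSucc_inj]

lemma mem_image_emb {d : ℕ} (S : Finset (Vtx d)) (x : Vtx d) :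
    emb x ∈ S.image emb ↔ x ∈ S := by
  simp only [Finset.mem_image]
  constructor
  · rintro ⟨s, hs, he⟩
    rwa [emb_injective he] at hs
  · exact fun h => ⟨x, h, rfl⟩

lemma edgeCount_image_emb {d : ℕ} (S : Finset (Vtx d)) (j : Fin d) :
    edgeCount (S.image emb) (Fin.castSucc j) = edgeCount S j := by
  unfold edgeCount
  rw [Finset.filter_image, Finset.card_image_of_injective _ emb_injective]
  congr 1
  apply Finset.filter_congr
  intro t _
  rw [emb_castSucc, emb_add_eV, mem_image_emb]

theorem stmt10 (d : ℕ) (hd : 1 ≤ d) (k : ℕ) (A B : Finset (Vtx d))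
    (hA : Equitable A k) (hB : Equitable B (k + 1))
    (hcross : ((A ×ˢ B).filter fun p => p.1 = p.2 + eV (⟨0, hd⟩ : Fin d)).card = 2 * k + 1) :
    Equitable
      ((A.image fun t => emb t) ∪
        (B.image fun t => emb t + eV 0 + eV (Fin.last d)))
      (2 * k + 1) := by
  have h0 : (0 : Fin (d + 1)) = Fin.castSucc (⟨0, hd⟩ : Fin d) := by
    rfl
  set c : Vtx (d + 1) := eV 0 + eV (Fin.last d) with hc
  have hP2eq : (B.image fun t => emb t + eV 0 + eV (Fin.last d))
      = (B.image emb).image (· + c) := by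
    rw [Finset.image_image]
    apply Finset.image_congr
    intro t _
    simp only [Function.comp_apply, hc, add_assoc]
  have hlast0 : (0 : Fin (d + 1)) ≠ Fin.last d := by
    intro h
    have := congrArg Fin.val h
    rw [Fin.val_zero, Fin.val_last] at this
    omega
  have hclast : c (Fin.last d) = 1 := by
    rw [hc, Pi.add_apply, eV_self, eV_ne hlast0.symm, zero_add]
  rw [hP2eq]
  set P1 := A.image (fun t => emb t) with hP1
  set P2 := (B.image emb).image (· + c) with hP2
  have hm1 : ∀ x ∈ P1, x (Fin.last d) = 0 := by
    intro x hx
    rw [hP1, Finset.mem_image] at hx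
    obtain ⟨a, _, rfl⟩ := hx
    exact emb_last a
  have hm2 : ∀ x ∈ P2, x (Fin.last d) = 1 := by
    intro x hx
    rw [hP2, Finset.mem_image] at hx
    obtain ⟨y, hy, rfl⟩ := hx
    rw [Finset.mem_image] at hy
    obtain ⟨b, _, rfl⟩ := hy
    rw [Pi.add_apply, emb_last, hclast, zero_add]
  intro i
  induction i using Fin.lastCases with
  | cast j =>
    -- split the filter over the disjoint union
    unfold edgeCount
    rw [Finset.filter_union]
    have hevlast : eV (Fin.castSucc j) (Fin.last d) = 0 :=
      eV_ne (Fin.castSucc_lt_last j).ne'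
    have h1 : P1.filter (fun t => t (Fin.castSucc j) = 0 ∧
          t + eV (Fin.castSucc j) ∈ P1 ∪ P2)
        = P1.filter (fun t => t (Fin.castSucc j) = 0 ∧
          t + eV (Fin.castSucc j) ∈ P1) := by
      apply Finset.filter_congr
      intro t ht
      have hl : (t + eV (Fin.castSucc j)) (Fin.last d) = 0 := by
        rw [Pi.add_apply, hm1 t ht, hevlast, add_zero]
      have : t + eV (Fin.castSucc j) ∉ P2 := fun h => by
        rw [hm2 _ h] at hl; exact one_ne_zero hl
      simp only [Finset.mem_union]
      tauto
    have h2 : P2.filter (fun t => t (Fin.castSucc j) = 0 ∧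
          t + eV (Fin.castSucc j) ∈ P1 ∪ P2)
        = P2.filter (fun t => t (Fin.castSucc j) = 0 ∧
          t + eV (Fin.castSucc j) ∈ P2) := by
      apply Finset.filter_congr
      intro t ht
      have hl : (t + eV (Fin.castSucc j)) (Fin.last d) = 1 := by
        rw [Pi.add_apply, hm2 t ht, hevlast, add_zero]
      have : t + eV (Fin.castSucc j) ∉ P1 := fun h => by
        rw [hm1 _ h] at hl; exact one_ne_zero hl.symm
      simp only [Finset.mem_union]
      tauto
    rw [h1, h2, Finset.card_union_of_disjoint]
    · have c1 : (P1.filter (fun t => t (Fin.castSucc j) = 0 ∧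
          t + eV (Fin.castSucc j) ∈ P1)).card = k := by
        have := edgeCount_image_emb A j
        unfold edgeCount at this
        rw [hP1, this]
        exact hA j
      have c2 : (P2.filter (fun t => t (Fin.castSucc j) = 0 ∧
          t + eV (Fin.castSucc j) ∈ P2)).card = k + 1 := by
        have t1 := edgeCount_image_add (B.image emb) c (Fin.castSucc j)
        have t2 := edgeCount_image_emb B j
        unfold edgeCount at t1 t2
        rw [hP2, t1, t2]
        exact hB j
      rw [c1, c2]
      ring
    · rw [Finset.disjoint_left]
      intro x hx1 hx2
      have e1 := hm1 x (Finset.mem_of_mem_filter x hx1)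
      have e2 := hm2 x (Finset.mem_of_mem_filter x hx2)
      rw [e1] at e2
      exact one_ne_zero e2.symm
  | last =>
    unfold edgeCount
    rw [Finset.filter_union]
    have h2 : P2.filter (fun t => t (Fin.last d) = 0 ∧
          t + eV (Fin.last d) ∈ P1 ∪ P2) = ∅ := by
      rw [Finset.filter_eq_empty_iff]
      intro t ht hcon
      rw [hm2 t ht] at hcon
      exact one_ne_zero hcon.1
    have h1 : P1.filter (fun t => t (Fin.last d) = 0 ∧
          t + eV (Fin.last d) ∈ P1 ∪ P2)
        = (A.filter (fun a => a + eV (⟨0, hd⟩ : Fin d) ∈ B)).image emb := by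
      rw [hP1, Finset.filter_image]
      congr 1
      apply Finset.filter_congr
      intro a _
      have hlt : (emb a + eV (Fin.last d)) (Fin.last d) = 1 := by
        rw [Pi.add_apply, emb_last, eV_self, zero_add]
      have hnp1 : emb a + eV (Fin.last d) ∉ P1 := fun h => by
        rw [hm1 _ h] at hlt; exact one_ne_zero hlt.symm
      have hiff : emb a + eV (Fin.last d) ∈ P2 ↔ a + eV (⟨0, hd⟩ : Fin d) ∈ B := by
        rw [hP2]
        simp only [Finset.mem_image, exists_exists_and_eq_and]
        constructor
        · rintro ⟨b, hb, he⟩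
          have : emb b + eV 0 + eV (Fin.last d) = emb a + eV (Fin.last d) := by
            rw [← he, hc]; ring
          have h3 : emb b + eV 0 = emb a := add_right_cancel this
          rw [h0, emb_add_eV] at h3
          have h4 : b + eV (⟨0, hd⟩ : Fin d) = a := emb_injective h3
          rwa [← h4, add_eV_add_eV]
        · intro hb
          refine ⟨a + eV (⟨0, hd⟩ : Fin d), hb, ?_⟩
          rw [hc, ← add_assoc, h0, emb_add_eV, add_eV_add_eV]
      constructor
      · rintro ⟨_, hmem⟩
        rw [Finset.mem_union] at hmem
        rcases hmem with h | h
        · exact absurd h hnp1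
        · exact hiff.mp h
      · intro hb
        refine ⟨emb_last a, ?_⟩
        rw [Finset.mem_union]
        exact Or.inr (hiff.mpr hb)
    rw [h1, h2, Finset.union_empty,
      Finset.card_image_of_injective _ emb_injective]
    rw [← hcross]
    apply Finset.card_bij' (fun a _ => (a, a + eV (⟨0, hd⟩ : Fin d)))
      (fun p _ => p.1)
    · intro a ha
      rw [Finset.mem_filter] at ha
      rw [Finset.mem_filter, Finset.mem_product]
      exact ⟨⟨ha.1, ha.2⟩, (add_eV_add_eV a _).symm⟩
    · intro p hp
      rw [Finset.mem_filter, Finset.mem_product] at hp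
      rw [Finset.mem_filter]
      refine ⟨hp.1.1, ?_⟩
      rw [hp.2, add_eV_add_eV]
      exact hp.1.2
    · intro a _; rfl
    · intro p hp
      rw [Finset.mem_filter] at hp
      ext
      · rfl
      · rw [hp.2, add_eV_add_eV]
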